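/- arXiv:1503.03393 — 3 statements merged into one kernel-verified Lean document; each statement's English description precedes it below -/
import Mathlib

section
/- Let α_n : [0,∞) → [0,∞) be monotone nondecreasing random processes, let β_n(t) = E[α_n(t)], and let η_n ≥ 0 be random variables such that β_n(η_n) → 0 in probability. Then α_n(η_n) → 0 in probability. -/
/-!
Since `β_n` is monotone, the times `t` with `β_n(t) < θ` form a down-set `S` of `ℝ`. On the event
`{β_n(η_n) < θ}` we have `η_n ∈ S`, so `{α_n(η_n) ≥ ε, β_n(η_n) < θ}` lies in the increasing union
of the events `{α_n(t) ≥ ε}`, `t ∈ S`. Continuity from below along a cofinal sequence of `S` and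
Markov's inequality at each fixed `t ∈ S` bound its measure by `θ / ε`, whatever the random time
`η_n`. Hence `P(α_n(η_n) ≥ ε) ≤ P(β_n(η_n) ≥ θ) + θ / ε`; let `n → ∞`, then `θ → 0`.
-/

open MeasureTheory Filter

noncomputable section

/-- Convergence in probability to a constant. -/
def TendstoInProb {Ω : Type*} [MeasurableSpace Ω] (μ : Measure Ω)
    (X : ℕ → Ω → ℝ) (c : ℝ) : Prop :=
  ∀ ε : ℝ, 0 < ε → Tendsto (fun n => μ {ω | ε ≤ |X n ω - c|}) atTop (nhds 0)

open Set

-- `S.OrdConnected` makes the subspace topology of `S` its order topology, so that `atTop` on `S`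
-- is countably generated.
theorem Monotone.measure_biUnion_of_ordConnected {α ι : Type*} [MeasurableSpace α]
    {μ : Measure α} [LinearOrder ι] [TopologicalSpace ι] [OrderTopology ι]
    [SecondCountableTopology ι] {E : ι → Set α} (hE : Monotone E) (S : Set ι) [S.OrdConnected] :
    μ (⋃ t ∈ S, E t) = ⨆ t ∈ S, μ (E t) := by
  rw [biUnion_eq_iUnion, iSup_subtype']
  exact (hE.comp (Subtype.mono_coe (· ∈ S))).measure_iUnion

section

variable {Ω : Type*} [MeasurableSpace Ω] {μ : Measure Ω}

theorem meas_ge_le_ofReal_integral_div {f : Ω → ℝ} (hf : ∀ ω, 0 ≤ f ω) (hint : Integrable f μ)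
    {ε : ℝ} (hε : 0 < ε) : μ {ω | ε ≤ f ω} ≤ ENNReal.ofReal ((∫ ω, f ω ∂μ) / ε) := by
  have hset : {ω | ε ≤ f ω} = {ω | ENNReal.ofReal ε ≤ ENNReal.ofReal (f ω)} := by
    ext ω
    simp [ENNReal.ofReal_le_ofReal_iff (hf ω)]
  rw [hset, ENNReal.ofReal_div_of_pos hε, ofReal_integral_eq_lintegral_ofReal hint (ae_of_all _ hf)]
  exact meas_ge_le_lintegral_div hint.aemeasurable.ennreal_ofReal (by simpa using hε)
    ENNReal.ofReal_ne_top

variable {f : Ω → ℝ → ℝ}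

theorem meas_ge_comp_and_integral_lt_le (hmono : ∀ ω, Monotone (f ω))
    (hnonneg : ∀ ω t, 0 ≤ f ω t) (hint : ∀ t, Integrable (fun ω => f ω t) μ) (g : Ω → ℝ)
    {ε : ℝ} (hε : 0 < ε) (θ : ℝ) :
    μ {ω | ε ≤ f ω (g ω) ∧ ∫ ω', f ω' (g ω) ∂μ < θ} ≤ ENNReal.ofReal (θ / ε) := by
  set S := {t | ∫ ω, f ω t ∂μ < θ}
  have : S.OrdConnected := IsLowerSet.ordConnected fun s t hts hs =>
    (integral_mono (hint t) (hint s) fun ω => hmono ω hts).trans_lt hs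
  have hE : Monotone fun t => {ω | ε ≤ f ω t} := fun s t hst ω hω => hω.trans (hmono ω hst)
  calc μ {ω | ε ≤ f ω (g ω) ∧ ∫ ω', f ω' (g ω) ∂μ < θ}
      ≤ μ (⋃ t ∈ S, {ω | ε ≤ f ω t}) := measure_mono fun ω hω => mem_biUnion hω.2 hω.1
    _ = ⨆ t ∈ S, μ {ω | ε ≤ f ω t} := hE.measure_biUnion_of_ordConnected S
    _ ≤ ENNReal.ofReal (θ / ε) := iSup₂_le fun t ht =>
      (meas_ge_le_ofReal_integral_div (hnonneg · t) (hint t) hε).trans <|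
        ENNReal.ofReal_le_ofReal <| div_le_div_of_nonneg_right ht.le hε.le

theorem meas_ge_comp_le_meas_integral_ge_add (hmono : ∀ ω, Monotone (f ω))
    (hnonneg : ∀ ω t, 0 ≤ f ω t) (hint : ∀ t, Integrable (fun ω => f ω t) μ) (g : Ω → ℝ)
    {ε : ℝ} (hε : 0 < ε) (θ : ℝ) :
    μ {ω | ε ≤ f ω (g ω)} ≤ μ {ω | θ ≤ ∫ ω', f ω' (g ω) ∂μ} + ENNReal.ofReal (θ / ε) :=
  calc μ {ω | ε ≤ f ω (g ω)}
      ≤ μ ({ω | θ ≤ ∫ ω', f ω' (g ω) ∂μ} ∪ {ω | ε ≤ f ω (g ω) ∧ ∫ ω', f ω' (g ω) ∂μ < θ}) :=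
        measure_mono fun _ hω => (le_or_gt θ _).imp id (⟨hω, ·⟩)
    _ ≤ _ := (measure_union_le _ _).trans <|
        add_le_add le_rfl (meas_ge_comp_and_integral_lt_le hmono hnonneg hint g hε θ)

end

theorem stmt_0_general {Ω : Type*} [MeasurableSpace Ω] (μ : Measure Ω)
    (α : ℕ → Ω → ℝ → ℝ) (η : ℕ → Ω → ℝ)
    (hmono : ∀ n ω, Monotone (α n ω))
    (hnonneg : ∀ n ω t, 0 ≤ α n ω t)
    (hint : ∀ n t, Integrable (fun ω => α n ω t) μ)
    (hβ : TendstoInProb μ (fun n ω => ∫ ω', α n ω' (η n ω) ∂μ) 0) :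
    TendstoInProb μ (fun n ω => α n ω (η n ω)) 0 := by
  intro ε hε
  refine ENNReal.tendsto_nhds_zero.2 fun c hc => ?_
  obtain ⟨δ, -, hδ, hδc⟩ := ENNReal.lt_iff_exists_real_btwn.1 (ENNReal.half_pos hc.ne')
  have hδ : 0 < δ := ENNReal.ofReal_pos.1 hδ
  filter_upwards [ENNReal.tendsto_nhds_zero.1 (hβ (ε * δ) (mul_pos hε hδ)) (c / 2)
    (ENNReal.half_pos hc.ne')] with n hn
  have hβnonneg : ∀ t, 0 ≤ ∫ ω, α n ω t ∂μ := fun t => integral_nonneg (hnonneg n · t)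
  simp only [sub_zero, abs_of_nonneg (hnonneg _ _ _), abs_of_nonneg (hβnonneg _)] at hn ⊢
  calc μ {ω | ε ≤ α n ω (η n ω)}
      ≤ μ {ω | ε * δ ≤ ∫ ω', α n ω' (η n ω) ∂μ} + ENNReal.ofReal (ε * δ / ε) :=
        meas_ge_comp_le_meas_integral_ge_add (hmono n) (hnonneg n) (hint n) (η n) hε _
    _ ≤ c / 2 + c / 2 := by
        rw [mul_div_cancel_left₀ _ hε.ne']
        exact add_le_add hn hδc.le
    _ = c := ENNReal.add_halves c

/-- Lemma 5.1: if `α n ω : [0,∞) → [0,∞)` are monotone nondecreasing random processes,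
`β n t = E[α n · t]`, and `β n (η n) → 0` in probability for nonnegative random variables
`η n`, then `α n (η n) → 0` in probability. -/
theorem stmt_0 {Ω : Type*} [MeasurableSpace Ω] (μ : Measure Ω) [IsProbabilityMeasure μ]
    (α : ℕ → Ω → ℝ → ℝ) (η : ℕ → Ω → ℝ)
    (hmono : ∀ n ω, Monotone (α n ω))
    (hnonneg : ∀ n ω t, 0 ≤ α n ω t)
    (hηnonneg : ∀ n ω, 0 ≤ η n ω)
    (hint : ∀ n t, Integrable (fun ω => α n ω t) μ)
    (hβ : TendstoInProb μ (fun n ω => ∫ ω', α n ω' (η n ω) ∂μ) 0) :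
    TendstoInProb μ (fun n ω => α n ω (η n ω)) 0 :=
  stmt_0_general μ α η hmono hnonneg hint hβ
end
end

section
/- Suppose J_n ≠ 0, I_n > 0, |J_n|/√I_n → ∞, τ̄_n : [0,∞] → [0,∞] are monotone nondecreasing functions with lim_{δ→0} limsup_{n→∞} τ̄_n(δ) = 0, and u_n* are random variables with (|J_n|/√I_n)·|u_n*|·τ̄_n(|u_n*|) → 0 in probability. Then τ̄_n(|u_n*|) → 0 in probability. -/
open MeasureTheory Filter Topology
open scoped ENNReal

/-! Choose `δ > 0` with `limsup_n τ̄_n(δ) < ε`, so that eventually `τ̄_n(δ) < ε`. By monotonicity,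
`τ̄_n(|u_n|) ≥ ε` then forces `|u_n| > δ`, and once `|J_n|/√I_n ≥ δ⁻¹` the prefactor
`(|J_n|/√I_n)·|u_n|` exceeds `1`. Hence `{ε ≤ τ̄_n(|u_n|)}` is eventually contained in
`{ε ≤ (|J_n|/√I_n)·|u_n|·τ̄_n(|u_n|)}`, whose measure tends to `0`. -/

lemma exists_pos_eventually_lt_of_tendsto_limsup {ι : Type*} {l : Filter ι}
    {f : ι → ℝ → ℝ≥0∞} (h : Tendsto (fun δ => limsup (fun i => f i δ) l) (𝓝[>] 0) (𝓝 0))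
    {ε : ℝ≥0∞} (hε : 0 < ε) : ∃ δ > 0, ∀ᶠ i in l, f i δ < ε := by
  obtain ⟨δ, hδε, hδ⟩ := ((h.eventually (gt_mem_nhds hε)).and self_mem_nhdsWithin).exists
  exact ⟨δ, hδ, eventually_lt_of_limsup_lt hδε⟩

lemma le_ofReal_mul_of_monotone {f : ℝ → ℝ≥0∞} (hf : Monotone f) {δ a t : ℝ} {ε : ℝ≥0∞}
    (hδ : 0 < δ) (hfδ : f δ < ε) (ha : δ⁻¹ ≤ a) (ht : ε ≤ f t) :
    ε ≤ ENNReal.ofReal (a * t) * f t := by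
  have hδt : δ < t := hf.reflect_lt (hfδ.trans_le ht)
  have ha₀ : 0 ≤ a := (inv_pos.2 hδ).le.trans ha
  have hat : 1 ≤ a * t :=
    calc 1 ≤ a * δ := (inv_le_iff_one_le_mul₀ hδ).1 ha
      _ ≤ a * t := by gcongr
  calc ε ≤ 1 * f t := by rwa [one_mul]
    _ ≤ ENNReal.ofReal (a * t) * f t := by gcongr; exact ENNReal.one_le_ofReal.2 hat

lemma tendsto_measure_zero_of_eventually_subset {Ω ι : Type*} [MeasurableSpace Ω]
    {μ : Measure Ω} {l : Filter ι} {s t : ι → Set Ω} (ht : Tendsto (fun i => μ (t i)) l (𝓝 0))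
    (hst : ∀ᶠ i in l, s i ⊆ t i) : Tendsto (fun i => μ (s i)) l (𝓝 0) :=
  tendsto_of_tendsto_of_tendsto_of_le_of_le' tendsto_const_nhds ht
    (Eventually.of_forall fun _ => zero_le) (hst.mono fun _ h => measure_mono h)

theorem stmt_4_general {Ω : Type*} [MeasurableSpace Ω] (μ : Measure Ω)
    (I J : ℕ → ℝ) (τ : ℕ → ℝ → ℝ≥0∞) (u : ℕ → Ω → ℝ)
    (hJI : Tendsto (fun n => |J n| / Real.sqrt (I n)) atTop atTop)
    (hmono : ∀ n, Monotone (τ n))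
    (hlimsup : Tendsto (fun δ : ℝ => Filter.limsup (fun n => τ n δ) atTop)
      (nhdsWithin 0 (Set.Ioi 0)) (nhds 0))
    (hprob : ∀ ε : ℝ≥0∞, 0 < ε →
      Tendsto (fun n => μ {ω | ε ≤
        ENNReal.ofReal (|J n| / Real.sqrt (I n) * |u n ω|) * τ n (|u n ω|)}) atTop (nhds 0)) :
    ∀ ε : ℝ≥0∞, 0 < ε →
      Tendsto (fun n => μ {ω | ε ≤ τ n (|u n ω|)}) atTop (nhds 0) := by
  intro ε hε
  obtain ⟨δ, hδ, hτδ⟩ := exists_pos_eventually_lt_of_tendsto_limsup hlimsup hε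
  refine tendsto_measure_zero_of_eventually_subset (hprob ε hε) ?_
  filter_upwards [hτδ, hJI.eventually_ge_atTop δ⁻¹] with n hτn hn ω hω
  exact le_ofReal_mul_of_monotone (hmono n) hδ hτn hn hω

/-- If `J n ≠ 0`, `I n > 0`, `|J n|/√(I n) → ∞`, the monotone functions `τ̄ n` satisfy
`lim_{δ→0⁺} limsup_n τ̄ n δ = 0`, and `(|J n|/√(I n))·|u n|·τ̄ n (|u n|) → 0` in probability,
then `τ̄ n (|u n|) → 0` in probability. -/
theorem stmt_4 {Ω : Type*} [MeasurableSpace Ω] (μ : Measure Ω) [IsProbabilityMeasure μ]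
    (I J : ℕ → ℝ) (τ : ℕ → ℝ → ℝ≥0∞) (u : ℕ → Ω → ℝ)
    (hI : ∀ n, 0 < I n) (hJ : ∀ n, J n ≠ 0)
    (hJI : Tendsto (fun n => |J n| / Real.sqrt (I n)) atTop atTop)
    (hmono : ∀ n, Monotone (τ n))
    (hlimsup : Tendsto (fun δ : ℝ => Filter.limsup (fun n => τ n δ) atTop)
      (nhdsWithin 0 (Set.Ioi 0)) (nhds 0))
    (hprob : ∀ ε : ℝ≥0∞, 0 < ε →
      Tendsto (fun n => μ {ω | ε ≤
        ENNReal.ofReal (|J n| / Real.sqrt (I n) * |u n ω|) * τ n (|u n ω|)}) atTop (nhds 0)) :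
    ∀ ε : ℝ≥0∞, 0 < ε →
      Tendsto (fun n => μ {ω | ε ≤ τ n (|u n ω|)}) atTop (nhds 0) :=
  stmt_4_general μ I J τ u hJI hmono hlimsup hprob
end

section
/- Under the regression model X_{ni} = f(θ, z_{n:i}) + ε_{ni} with E ε_{ni} = 0 and E ε_{ni}² < ∞, assume: T(t) = ∫_c^d f(t,z) dz is strictly monotone and continuous on (a,b), the inverse T^{−1} is Hölder with exponent p ∈ (0,1] and constant K; α_n^{1/p} d_n → 0 where d_n² := Σ_i (Δz_{ni})² E ε_{ni}²; α_n^{1/p} Σ_i ω_{f,θ}(Δz_{ni}) Δz_{ni} → 0; and α_n^{1/p} ∫_{z_{n:n}}^d f(θ,z) dz → 0. Then the estimator θ_n* := T^{−1}(Σ_i Δz_{ni} X_{ni}) satisfies α_n(θ_n* − θ) → 0 in probability. -/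
/-!
Write `S_n = Σ Δz_{ni} X_{ni}`. Since `T⁻¹(T θ) = θ`, the Hölder bound gives
`α_n |θ_n* - θ| ≤ K (α_n^{1/p} |S_n - T θ|)^p`, so it suffices that `α_n^{1/p} (S_n - T θ) → 0` in
probability. Now `S_n - T θ` splits into the Riemann-sum error
`Σ Δz_{ni} f(θ, z_{n:i}) - ∫_c^d f(θ, ·)`, bounded by `Σ ω_{f,θ}(Δz_{ni}) Δz_{ni}` plus the tail
integral over `[z_{n:n}, d)`, and the centred noise `Σ Δz_{ni} ε_{ni}`, whose variance is `d_n²`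
by independence. After scaling,
the first part tends to 0 by hypothesis and the second in probability by Chebyshev's inequality.
-/

open MeasureTheory Filter ProbabilityTheory Topology

theorem monotoneOn_Iic_of_le_add_one {β : Type*} [Preorder β] {z : ℕ → β} {m : ℕ}
    (hz : ∀ i < m, z i ≤ z (i + 1)) : MonotoneOn z (Set.Iic m) :=
  monotoneOn_of_le_add_one Set.ordConnected_Iic fun i _ _ hi => hz i hi

theorem setIntegral_Ico_eq_sum_range {E : Type*} [NormedAddCommGroup E] [NormedSpace ℝ E]
    {μ : Measure ℝ} {f : ℝ → E} {z : ℕ → ℝ} {m : ℕ} (hz : MonotoneOn z (Set.Iic m))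
    (hf : IntegrableOn f (Set.Ico (z 0) (z m)) μ) :
    ∫ t in Set.Ico (z 0) (z m), f t ∂μ =
      ∑ i ∈ Finset.range m, ∫ t in Set.Ico (z i) (z (i + 1)), f t ∂μ := by
  induction m with
  | zero => simp
  | succ k ih =>
    have h0k : z 0 ≤ z k := hz (by simp) (by simp) k.zero_le
    have hk : z k ≤ z (k + 1) := hz (by simp) (by simp) k.le_succ
    rw [← Set.Ico_union_Ico_eq_Ico h0k hk] at hf ⊢
    rw [setIntegral_union Set.Ico_disjoint_Ico_same measurableSet_Ico hf.left_of_union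
      hf.right_of_union, Finset.sum_range_succ,
      ih (hz.mono (Set.Iic_subset_Iic.mpr k.le_succ)) hf.left_of_union]

theorem abs_mul_sub_setIntegral_Ico_le {f : ℝ → ℝ} {x y C : ℝ} (hxy : x ≤ y)
    (hf : IntegrableOn f (Set.Ico x y)) (hC : ∀ t ∈ Set.Ico x y, |f y - f t| ≤ C) :
    |(y - x) * f y - ∫ t in Set.Ico x y, f t| ≤ C * (y - x) := by
  have hvol : volume (Set.Ico x y) < ⊤ := by simp
  have hconst : (y - x) * f y = ∫ _ in Set.Ico x y, f y := by
    rw [setIntegral_const, Real.volume_real_Ico_of_le hxy, smul_eq_mul]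
  have hint : IntegrableOn (fun _ => f y) (Set.Ico x y) := integrableOn_const
  rw [hconst, ← integral_sub hint hf, ← Real.volume_real_Ico_of_le hxy]
  simp_rw [← Real.norm_eq_abs] at hC ⊢
  exact norm_setIntegral_le_of_norm_le_const hvol hC

theorem abs_riemannSum_sub_setIntegral_le {f ω : ℝ → ℝ} {z : ℕ → ℝ} {m : ℕ} {d : ℝ}
    (hz : MonotoneOn z (Set.Iic m)) (hzd : z m < d) (hf : IntegrableOn f (Set.Ico (z 0) d))
    (hω : ∀ t₁ ∈ Set.Ico (z 0) d, ∀ t₂ ∈ Set.Ico (z 0) d, ∀ Δ : ℝ,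
      |t₁ - t₂| ≤ Δ → |f t₁ - f t₂| ≤ ω Δ) :
    |(∑ i ∈ Finset.range m, (z (i + 1) - z i) * f (z (i + 1))) - ∫ t in Set.Ico (z 0) d, f t| ≤
      (∑ i ∈ Finset.range m, ω (z (i + 1) - z i) * (z (i + 1) - z i)) +
        |∫ t in Set.Ico (z m) d, f t| := by
  have h0m : z 0 ≤ z m := hz (by simp) (by simp) m.zero_le
  have hsplit : ∫ t in Set.Ico (z 0) d, f t =
      (∑ i ∈ Finset.range m, ∫ t in Set.Ico (z i) (z (i + 1)), f t) +
        ∫ t in Set.Ico (z m) d, f t := by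
    rw [← Set.Ico_union_Ico_eq_Ico h0m hzd.le] at hf ⊢
    rw [setIntegral_union Set.Ico_disjoint_Ico_same measurableSet_Ico hf.left_of_union
      hf.right_of_union]
    exact congrArg (· + _) (setIntegral_Ico_eq_sum_range hz hf.left_of_union)
  have hpiece : ∀ i ∈ Finset.range m,
      |(z (i + 1) - z i) * f (z (i + 1)) - ∫ t in Set.Ico (z i) (z (i + 1)), f t| ≤
        ω (z (i + 1) - z i) * (z (i + 1) - z i) := by
    intro i hi
    have him : i + 1 ≤ m := Finset.mem_range.mp hi
    have h0i : z 0 ≤ z i := hz (by simp) (by simp; omega) i.zero_le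
    have hii : z i ≤ z (i + 1) := hz (by simp; omega) (by simpa) i.le_succ
    have hid : z (i + 1) < d := (hz (by simpa) (by simp) him).trans_lt hzd
    have hsub : Set.Ico (z i) (z (i + 1)) ⊆ Set.Ico (z 0) d := Set.Ico_subset_Ico h0i hid.le
    refine abs_mul_sub_setIntegral_Ico_le hii (hf.mono_set hsub) fun t ht => hω _ ?_ _ (hsub ht) _ ?_
    · exact ⟨h0i.trans hii, hid⟩
    · rw [abs_of_nonneg (by linarith [ht.2])]
      linarith [ht.1]
  calc _ = |(∑ i ∈ Finset.range m, ((z (i + 1) - z i) * f (z (i + 1)) -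
          ∫ t in Set.Ico (z i) (z (i + 1)), f t)) - ∫ t in Set.Ico (z m) d, f t| := by
        rw [hsplit, Finset.sum_sub_distrib, sub_sub]
    _ ≤ _ := (abs_sub _ _).trans (add_le_add_left
        ((Finset.abs_sum_le_sum_abs _ _).trans (Finset.sum_le_sum hpiece)) _)

theorem variance_sum_mul_of_pairwise_indepFun {Ω ι : Type*} [MeasurableSpace Ω]
    {μ : Measure Ω} {s : Finset ι} {X : ι → Ω → ℝ} (hX : ∀ i ∈ s, MemLp (X i) 2 μ)
    (hmean : ∀ i ∈ s, μ[X i] = 0) (hind : Set.Pairwise s fun i j => IndepFun (X i) (X j) μ)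
    (w : ι → ℝ) :
    variance (fun ω => ∑ i ∈ s, w i * X i ω) μ = ∑ i ∈ s, w i ^ 2 * ∫ ω, X i ω ^ 2 ∂μ := by
  have hsum : (fun ω => ∑ i ∈ s, w i * X i ω) = ∑ i ∈ s, fun ω => w i * X i ω := by
    ext ω; simp [Finset.sum_apply]
  rw [hsum, IndepFun.variance_sum (fun i hi => (hX i hi).const_mul (w i))
    fun i hi j hj hij => (hind hi hj hij).comp (measurable_const_mul (w i)) (measurable_const_mul (w j))]
  refine Finset.sum_congr rfl fun i hi => ?_
  rw [variance_const_mul, variance_of_integral_eq_zero (hX i hi).aemeasurable (hmean i hi)]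

theorem ProbabilityTheory.iIndepFun.pairwise_indepFun_range {Ω β : Type*} [MeasurableSpace Ω] [MeasurableSpace β]
    {μ : Measure Ω} {n : ℕ} {Y : ℕ → Ω → β} (h : iIndepFun (fun i : Fin n => Y i) μ) :
    Set.Pairwise (Finset.range n : Set ℕ) fun i j => IndepFun (Y i) (Y j) μ :=
  fun i hi j hj hij => h.indepFun (i := ⟨i, by simpa using hi⟩) (j := ⟨j, by simpa using hj⟩)
    (by simpa [Fin.ext_iff] using hij)

theorem tendsto_measure_le_abs_add_of_tendsto_variance {Ω : Type*} [MeasurableSpace Ω]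
    {μ : Measure Ω} [IsFiniteMeasure μ] {a : ℕ → ℝ} {Y : ℕ → Ω → ℝ}
    (ha : Tendsto a atTop (𝓝 0)) (hY : ∀ n, MemLp (Y n) 2 μ) (hmean : ∀ n, μ[Y n] = 0)
    (hvar : Tendsto (fun n => variance (Y n) μ) atTop (𝓝 0)) {η : ℝ} (hη : 0 < η) :
    Tendsto (fun n => μ {ω | η ≤ |a n + Y n ω|}) atTop (𝓝 0) := by
  have hbound : Tendsto (fun n => ENNReal.ofReal (variance (Y n) μ / (η / 2) ^ 2)) atTop (𝓝 0) := by
    simpa using ENNReal.tendsto_ofReal (hvar.div_const ((η / 2) ^ 2))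
  have hsmall : ∀ᶠ n in atTop, |a n| < η / 2 := by
    simpa using ha.abs.eventually (gt_mem_nhds (by simpa using half_pos hη))
  refine tendsto_of_tendsto_of_tendsto_of_le_of_le' tendsto_const_nhds hbound
    (Eventually.of_forall fun _ => zero_le) ?_
  filter_upwards [hsmall] with n hn
  calc μ {ω | η ≤ |a n + Y n ω|} ≤ μ {ω | η / 2 ≤ |Y n ω - μ[Y n]|} := by
        refine measure_mono fun ω hω => ?_
        simp only [Set.mem_ofPred_eq, hmean, sub_zero] at hω ⊢
        linarith [abs_add_le (a n) (Y n ω)]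
    _ ≤ _ := meas_ge_le_variance_div_sq (hY n) (half_pos hη)

theorem tendsto_measure_le_abs_add_sum_mul {Ω ι : Type*} [MeasurableSpace Ω]
    {μ : Measure Ω} [IsFiniteMeasure μ] {a : ℕ → ℝ} {s : ℕ → Finset ι} {w : ℕ → ι → ℝ}
    {X : ℕ → ι → Ω → ℝ} (ha : Tendsto a atTop (𝓝 0)) (hX : ∀ n, ∀ i ∈ s n, MemLp (X n i) 2 μ)
    (hmean : ∀ n, ∀ i ∈ s n, μ[X n i] = 0)
    (hind : ∀ n, Set.Pairwise (s n) fun i j => IndepFun (X n i) (X n j) μ)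
    (hvar : Tendsto (fun n => ∑ i ∈ s n, w n i ^ 2 * ∫ ω, X n i ω ^ 2 ∂μ) atTop (𝓝 0))
    {η : ℝ} (hη : 0 < η) :
    Tendsto (fun n => μ {ω | η ≤ |a n + ∑ i ∈ s n, w n i * X n i ω|}) atTop (𝓝 0) := by
  refine tendsto_measure_le_abs_add_of_tendsto_variance ha
    (fun n => memLp_finsetSum _ fun i hi => (hX n i hi).const_mul _) (fun n => ?_) ?_ hη
  · rw [integral_finsetSum _ fun i hi => ((hX n i hi).integrable one_le_two).const_mul _]
    exact Finset.sum_eq_zero fun i hi => by rw [integral_const_mul, hmean n i hi, mul_zero]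
  · simpa only [variance_sum_mul_of_pairwise_indepFun (hX _) (hmean _) (hind _)] using hvar

theorem rpow_one_div_le_abs_mul_of_holder {g : ℝ → ℝ} {K p α e s s₀ y₀ : ℝ}
    (hg : ∀ s₁ s₂, |g s₁ - g s₂| ≤ K * |s₁ - s₂| ^ p) (hK : 0 < K) (hp : 0 < p) (hα : 0 < α)
    (he : 0 ≤ e) (hs₀ : g s₀ = y₀) (h : e ≤ |α * (g s - y₀)|) :
    (e / K) ^ (1 / p) ≤ |α ^ (1 / p) * (s - s₀)| := by
  rw [← hs₀, abs_mul, abs_of_pos hα] at h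
  rw [abs_mul, abs_of_pos (by positivity), one_div,
    Real.rpow_inv_le_iff_of_pos (by positivity) (by positivity) hp,
    Real.mul_rpow (by positivity) (abs_nonneg _), Real.rpow_inv_rpow hα.le hp.ne', div_le_iff₀ hK]
  calc e ≤ α * (K * |s - s₀| ^ p) := h.trans (mul_le_mul_of_nonneg_left (hg s s₀) hα.le)
    _ = α * |s - s₀| ^ p * K := by ring

theorem stmt_9_general {Ω : Type*} [MeasurableSpace Ω] (μ : Measure Ω) [IsProbabilityMeasure μ]
    (c d θ : ℝ)
    (f : ℝ → ℝ → ℝ) (T Tinv : ℝ → ℝ) (K p : ℝ) (hp0 : 0 < p)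
    (z : ℕ → ℕ → ℝ) (ε : ℕ → ℕ → Ω → ℝ) (αn : ℕ → ℝ) (ωf : ℝ → ℝ)
    (hz0 : ∀ n, z n 0 = c)
    (hzmono : ∀ n, ∀ i < n, z n i ≤ z n (i + 1)) (hzlt : ∀ n, z n n < d)
    (hαpos : ∀ n, 0 < αn n)
    (hTθ : T θ = ∫ t in Set.Ico c d, f θ t)
    (hTinvT : Tinv (T θ) = θ)
    (hHolder : ∀ s₁ s₂ : ℝ, |Tinv s₁ - Tinv s₂| ≤ K * |s₁ - s₂| ^ p)
    (hεmean : ∀ n i, ∫ ω, ε n i ω ∂μ = 0)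
    (hεL2 : ∀ n i, MemLp (ε n i) 2 μ)
    (hεindep : ∀ n, iIndepFun (fun i : Fin n => ε n (i + 1)) μ)
    (hω : ∀ t₁ ∈ Set.Ico c d, ∀ t₂ ∈ Set.Ico c d, ∀ Δ : ℝ,
      |t₁ - t₂| ≤ Δ → |f θ t₁ - f θ t₂| ≤ ωf Δ)
    (hintf : IntegrableOn (f θ) (Set.Ico c d))
    (hd2 : Tendsto (fun n => αn n ^ ((1:ℝ)/p) *
      Real.sqrt (∑ i ∈ Finset.range n,
        (z n (i + 1) - z n i) ^ 2 * ∫ ω, (ε n (i + 1) ω) ^ 2 ∂μ)) atTop (nhds 0))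
    (hωsum : Tendsto (fun n => αn n ^ ((1:ℝ)/p) *
      ∑ i ∈ Finset.range n, ωf (z n (i + 1) - z n i) * (z n (i + 1) - z n i)) atTop (nhds 0))
    (htail : Tendsto (fun n => αn n ^ ((1:ℝ)/p) *
      ∫ t in Set.Ico (z n n) d, f θ t) atTop (nhds 0)) :
    ∀ e : ℝ, 0 < e → Tendsto (fun n => μ {ω | e ≤
      |αn n * (Tinv (∑ i ∈ Finset.range n,
        (z n (i + 1) - z n i) * (f θ (z n (i + 1)) + ε n (i + 1) ω)) - θ)|}) atTop (nhds 0) := by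
  intro e he
  set q : ℝ := 1 / p
  have hK₁ : 0 < max K 1 := lt_max_of_lt_right one_pos
  have hαq : ∀ n, 0 < αn n ^ q := fun n => Real.rpow_pos_of_pos (hαpos n) q
  have hHolder₁ : ∀ s₁ s₂ : ℝ, |Tinv s₁ - Tinv s₂| ≤ max K 1 * |s₁ - s₂| ^ p := fun s₁ s₂ =>
    (hHolder s₁ s₂).trans (mul_le_mul_of_nonneg_right (le_max_left K 1) (by positivity))
  set D : ℕ → ℝ := fun n =>
    (∑ i ∈ Finset.range n, (z n (i + 1) - z n i) * f θ (z n (i + 1))) - T θ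
  have hD : Tendsto (fun n => αn n ^ q * D n) atTop (𝓝 0) := by
    refine squeeze_zero_norm (fun n => ?_) (by simpa using hωsum.add htail.abs)
    have hz := abs_riemannSum_sub_setIntegral_le (monotoneOn_Iic_of_le_add_one (hzmono n))
      (hzlt n) (hz0 n ▸ hintf) (hz0 n ▸ hω)
    rw [hz0 n, ← hTθ] at hz
    rw [Real.norm_eq_abs, abs_mul, abs_of_pos (hαq n), ← mul_add]
    exact mul_le_mul_of_nonneg_left hz (hαq n).le
  have hvar : Tendsto (fun n => ∑ i ∈ Finset.range n,
      (αn n ^ q * (z n (i + 1) - z n i)) ^ 2 * ∫ ω, ε n (i + 1) ω ^ 2 ∂μ) atTop (𝓝 0) := by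
    have hd2sq := hd2.pow 2
    rw [zero_pow two_ne_zero] at hd2sq
    refine hd2sq.congr fun n => ?_
    rw [mul_pow, Real.sq_sqrt (Finset.sum_nonneg fun i _ =>
      mul_nonneg (sq_nonneg _) (integral_nonneg fun ω => sq_nonneg _)), Finset.mul_sum]
    simp only [mul_pow, mul_assoc]
  refine tendsto_of_tendsto_of_tendsto_of_le_of_le tendsto_const_nhds
    (tendsto_measure_le_abs_add_sum_mul hD (fun n i _ => hεL2 n (i + 1))
      (fun n i _ => hεmean n (i + 1))
      (fun n => (hεindep n).pairwise_indepFun_range (Y := fun i => ε n (i + 1))) hvar (Real.rpow_pos_of_pos (div_pos he hK₁) q))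
    (fun _ => zero_le) fun n => measure_mono fun ω hω => ?_
  refine (rpow_one_div_le_abs_mul_of_holder hHolder₁ hK₁ hp0 (hαpos n) he.le hTinvT hω).trans_eq
    (congrArg abs ?_)
  simp only [D, mul_add, Finset.sum_add_distrib, mul_assoc, ← Finset.mul_sum]
  ring

/-- Theorem 3.5, first part: consistency of the Riemann-sum-based preliminary estimator
`θ* n = T⁻¹(Σ_i Δz_{ni} X_{ni})` in the regression model `X_{ni} = f(θ, z_{n:i}) + ε_{ni}`.
Under strict monotonicity/continuity of `T`, Hölder continuity of `T⁻¹` with exponent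
`p ∈ (0,1]`, and the rate conditions `α_n^{1/p} d_n → 0`,
`α_n^{1/p} Σ_i ω_{f,θ}(Δz_{ni}) Δz_{ni} → 0`, `α_n^{1/p} ∫_{z_{n:n}}^d f(θ,z)dz → 0`,
the estimator satisfies `α_n (θ* n − θ) → 0` in probability. -/
theorem stmt_9 {Ω : Type*} [MeasurableSpace Ω] (μ : Measure Ω) [IsProbabilityMeasure μ]
    (a b c d θ : ℝ) (hθ : θ ∈ Set.Ioo a b) (hcd : c < d)
    (f : ℝ → ℝ → ℝ) (T Tinv : ℝ → ℝ) (K p : ℝ) (hp0 : 0 < p) (hp1 : p ≤ 1)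
    (z : ℕ → ℕ → ℝ) (ε : ℕ → ℕ → Ω → ℝ) (αn : ℕ → ℝ) (ωf : ℝ → ℝ)
    (hz0 : ∀ n, z n 0 = c)
    (hzmono : ∀ n, ∀ i < n, z n i ≤ z n (i + 1)) (hzlt : ∀ n, z n n < d)
    (hαpos : ∀ n, 0 < αn n)
    (hTmono : StrictMonoOn T (Set.Ioo a b)) (hTcont : ContinuousOn T (Set.Ioo a b))
    (hTθ : T θ = ∫ t in Set.Ico c d, f θ t)
    (hTinvT : Tinv (T θ) = θ)
    (hHolder : ∀ s₁ s₂ : ℝ, |Tinv s₁ - Tinv s₂| ≤ K * |s₁ - s₂| ^ p)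
    (hεmeas : ∀ n i, Measurable (ε n i))
    (hεmean : ∀ n i, ∫ ω, ε n i ω ∂μ = 0)
    (hεL2 : ∀ n i, MemLp (ε n i) 2 μ)
    (hεindep : ∀ n, iIndepFun (fun i : Fin n => ε n (i + 1)) μ)
    (hω : ∀ t₁ ∈ Set.Ico c d, ∀ t₂ ∈ Set.Ico c d, ∀ Δ : ℝ,
      |t₁ - t₂| ≤ Δ → |f θ t₁ - f θ t₂| ≤ ωf Δ)
    (hintf : IntegrableOn (f θ) (Set.Ico c d))
    (hd2 : Tendsto (fun n => αn n ^ ((1:ℝ)/p) *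
      Real.sqrt (∑ i ∈ Finset.range n,
        (z n (i + 1) - z n i) ^ 2 * ∫ ω, (ε n (i + 1) ω) ^ 2 ∂μ)) atTop (nhds 0))
    (hωsum : Tendsto (fun n => αn n ^ ((1:ℝ)/p) *
      ∑ i ∈ Finset.range n, ωf (z n (i + 1) - z n i) * (z n (i + 1) - z n i)) atTop (nhds 0))
    (htail : Tendsto (fun n => αn n ^ ((1:ℝ)/p) *
      ∫ t in Set.Ico (z n n) d, f θ t) atTop (nhds 0)) :
    ∀ e : ℝ, 0 < e → Tendsto (fun n => μ {ω | e ≤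
      |αn n * (Tinv (∑ i ∈ Finset.range n,
        (z n (i + 1) - z n i) * (f θ (z n (i + 1)) + ε n (i + 1) ω)) - θ)|}) atTop (nhds 0) :=
  stmt_9_general μ c d θ f T Tinv K p hp0 z ε αn ωf hz0 hzmono hzlt hαpos hTθ hTinvT hHolder hεmean
    hεL2 hεindep hω hintf hd2 hωsum htail
end
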